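/- arXiv:math/0612856 — 3 statements merged into one kernel-verified Lean document; each statement's English description precedes it below -/
import Mathlib

section
/- Fix an integer m ≥ 2. Let f : ℕ → ℝ be strictly positive and let γ > 0 be such that lim_{n→∞} f(n)/f(n+1) = γ, ∑_{n≥0} γ^n f(n) < ∞, and there exists a finite constant C₁(m) such that (max_{⌈n/m⌉ ≤ k ≤ n} γ^k f(k)) / (min_{⌈n/m⌉ ≤ k ≤ n} γ^k f(k)) ≤ C₁(m) for all n ≥ 1. Then for every monotone configuration η ∈ X_{m-1}, the probabilities ν̂_{m-1,n}(η) converge, as n → ∞, to μ̂_{m-1,γ}(η). -/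
open Filter Topology

noncomputable section

/-- The order operator `𝔒`: rearrange the coordinates of a configuration in
nondecreasing order. -/
def ord {m : ℕ} (ξ : Fin m → ℕ) : Fin m → ℕ := ξ ∘ Tuple.sort ξ

/-- The cut operator `ℭ`: delete the last coordinate of a configuration. -/
def cut {m : ℕ} (ξ : Fin m → ℕ) : Fin (m - 1) → ℕ :=
  fun i => ξ (Fin.castLE (Nat.sub_le m 1) i)

/-- `K_k(ζ)`: the number of configurations of `ℕ^k` whose ordering is `ζ`. -/
def K {k : ℕ} (ζ : Fin k → ℕ) : ℕ := Nat.card {ξ : Fin k → ℕ // ord ξ = ζ}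

/-- `K_{m-1,n}(η)`: the number of configurations of `ℕ^m` with `n` particles whose
ordering followed by cutting gives `η`. -/
def Kn (m n : ℕ) (η : Fin (m - 1) → ℕ) : ℕ :=
  Nat.card {ξ : Fin m → ℕ // (∑ j, ξ j) = n ∧ cut (ord ξ) = η}

/-- The canonical measure `ν_{m,n}`, i.e. the grand canonical measure conditioned on
configurations with `n` particles. -/
def nu (f : ℕ → ℝ) (m n : ℕ) (ξ : Fin m → ℕ) : ℝ :=
  if (∑ j, ξ j) = n then
    (∏ j, f (ξ j)) / ∑' ξ' : {ξ' : Fin m → ℕ // (∑ j, ξ' j) = n}, ∏ j, f (ξ'.1 j)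
  else 0

/-- The grand canonical measure `μ_{m,φ}`. -/
def mu (f : ℕ → ℝ) (m : ℕ) (φ : ℝ) (ξ : Fin m → ℕ) : ℝ :=
  (∏ j, φ ^ (ξ j) * f (ξ j)) / (∑' k : ℕ, φ ^ k * f k) ^ m

/-- The ordered-and-cut canonical measure `ν̂_{m-1,n} = ν_{m,n} ∘ (ℭ ∘ 𝔒)⁻¹`. -/
def nuHat (f : ℕ → ℝ) (m n : ℕ) (η : Fin (m - 1) → ℕ) : ℝ :=
  ∑' ξ : {ξ : Fin m → ℕ // (∑ j, ξ j) = n ∧ cut (ord ξ) = η}, nu f m n ξ.1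

/-- The ordered grand canonical measure `μ̂_{k,φ} = μ_{k,φ} ∘ 𝔒⁻¹`. -/
def muHat (f : ℕ → ℝ) (k : ℕ) (φ : ℝ) (ζ : Fin k → ℕ) : ℝ :=
  ∑' ξ : {ξ : Fin k → ℕ // ord ξ = ζ}, mu f k φ ξ.1

namespace CondensationAux

open Finset

instance fintypeFixedSum (m n : ℕ) : Fintype {ξ : Fin m → ℕ // (∑ j, ξ j) = n} :=
  Fintype.ofFinset (Finset.Nat.antidiagonalTuple m n) fun ξ =>
    Finset.Nat.mem_antidiagonalTuple

/-- The `m`-fold "canonical partition function" built from `g`. -/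
def Sg (g : ℕ → ℝ) (m n : ℕ) : ℝ :=
  ∑ ξ : {ξ : Fin m → ℕ // (∑ j, ξ j) = n}, ∏ j, g (ξ.1 j)

lemma Sg_one (g : ℕ → ℝ) (n : ℕ) : Sg g 1 n = g n := by
  have h : ∀ ξ : {ξ : Fin 1 → ℕ // (∑ j, ξ j) = n}, (∏ j, g (ξ.1 j)) = g n := by
    rintro ⟨ξ, hξ⟩
    rw [Fin.sum_univ_one] at hξ
    rw [Fin.prod_univ_one]
    exact congrArg g hξ
  rw [Sg, Finset.sum_congr rfl (fun ξ _ => h ξ), Finset.sum_const, Finset.card_univ]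
  have hcard : Fintype.card {ξ : Fin 1 → ℕ // (∑ j, ξ j) = n} = 1 := by
    rw [Fintype.card_eq_one_iff]
    refine ⟨⟨fun _ => n, by simp⟩, ?_⟩
    rintro ⟨ξ, hξ⟩
    apply Subtype.ext
    funext j
    rw [Fin.sum_univ_one] at hξ
    have hj : j = 0 := Subsingleton.elim _ _
    rw [hj]; exact hξ
  rw [hcard, one_smul]

lemma Sg_succ (g : ℕ → ℝ) (k n : ℕ) :
    Sg g (k + 1) n = ∑ r ∈ Finset.range (n + 1), Sg g k (n - r) * g r := by
  classical
  have key : ∀ (p : (r : Fin (n+1)) × {ξ' : Fin k → ℕ // (∑ j, ξ' j) = n - r.1}),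
      (∑ j, (Fin.snoc p.2.1 p.1.1 : Fin (k+1) → ℕ) j) = n := by
    rintro ⟨r, ξ', hξ'⟩
    rw [Fin.sum_univ_castSucc]
    simp only [Fin.snoc_castSucc, Fin.snoc_last]
    have h2 : r.1 ≤ n := Nat.lt_succ_iff.mp r.2
    omega
  have key2 : ∀ ξ : {ξ : Fin (k+1) → ℕ // (∑ j, ξ j) = n}, ξ.1 (Fin.last k) < n + 1 := by
    intro ξ
    have hξ := ξ.2
    have h2 : ξ.1 (Fin.last k) ≤ ∑ j, ξ.1 j :=
      Finset.single_le_sum (f := fun j => ξ.1 j) (fun i _ => Nat.zero_le _) (Finset.mem_univ _)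
    omega
  have key3 : ∀ ξ : {ξ : Fin (k+1) → ℕ // (∑ j, ξ j) = n},
      (∑ j, Fin.init ξ.1 j) = n - ξ.1 (Fin.last k) := by
    intro ξ
    have hξ := ξ.2
    rw [Fin.sum_univ_castSucc] at hξ
    simp only [Fin.init]
    omega
  let e : ((r : Fin (n+1)) × {ξ' : Fin k → ℕ // (∑ j, ξ' j) = n - r.1}) ≃
      {ξ : Fin (k+1) → ℕ // (∑ j, ξ j) = n} :=
    { toFun := fun p => ⟨Fin.snoc p.2.1 p.1.1, key p⟩
      invFun := fun ξ => ⟨⟨ξ.1 (Fin.last k), key2 ξ⟩, ⟨Fin.init ξ.1, key3 ξ⟩⟩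
      left_inv := fun p => by
        refine Sigma.subtype_ext (Fin.ext ?_) ?_ <;>
          simp [Fin.snoc_last, Fin.init_snoc]
      right_inv := fun ξ => Subtype.ext (Fin.snoc_init_self ξ.1) }
  rw [Sg, ← Equiv.sum_comp e (fun ξ : {ξ : Fin (k+1) → ℕ // (∑ j, ξ j) = n} => ∏ j, g (ξ.1 j)),
    ← Finset.univ_sigma_univ, Finset.sum_sigma,
    Finset.sum_range fun r => Sg g k (n - r) * g r]
  refine Fintype.sum_congr _ _ fun r => ?_
  rw [Sg, Finset.sum_mul]
  refine Fintype.sum_congr _ _ fun ξ' => ?_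
  simp only [e, Equiv.coe_fn_mk]
  rw [Fin.prod_univ_castSucc]
  simp only [Fin.snoc_castSucc, Fin.snoc_last]

lemma Sg_succ' (g : ℕ → ℝ) (k n : ℕ) :
    Sg g (k + 1) n = ∑ j ∈ Finset.range (n + 1), Sg g k j * g (n - j) := by
  rw [Sg_succ]
  have h := Finset.sum_range_reflect (fun r => Sg g k (n - r) * g r) (n + 1)
  rw [← h]
  refine Finset.sum_congr rfl fun j hj => ?_
  rw [Finset.mem_range] at hj
  have h1 : n + 1 - 1 - j = n - j := by omega
  have h2 : n - (n - j) = j := by omega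
  rw [h1, h2]

lemma Sg_nonneg (g : ℕ → ℝ) (hg : ∀ i, 0 ≤ g i) (m n : ℕ) : 0 ≤ Sg g m n :=
  Finset.sum_nonneg fun ξ _ => Finset.prod_nonneg fun j _ => hg _

lemma Sg_pos (g : ℕ → ℝ) (hg : ∀ i, 0 < g i) (t n : ℕ) : 0 < Sg g (t + 1) n := by
  induction t generalizing n with
  | zero => rw [Sg_one]; exact hg n
  | succ t ih =>
    rw [Sg_succ]
    exact Finset.sum_pos (fun r _ => mul_pos (ih _) (hg _)) ⟨0, by simp⟩

set_option maxHeartbeats 1000000 in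
lemma Sg_summable_tsum (g : ℕ → ℝ) (hg0 : ∀ i, 0 ≤ g i) (hgs : Summable g) (t : ℕ) :
    Summable (Sg g (t + 1)) ∧ (∑' n, Sg g (t + 1) n) = (∑' n, g n) ^ (t + 1) := by
  induction t with
  | zero =>
    constructor
    · exact hgs.congr fun n => (Sg_one g n).symm
    · rw [pow_one]; exact tsum_congr fun n => Sg_one g n
  | succ t ih =>
    have hnorm_a : Summable fun n => ‖Sg g (t + 1) n‖ :=
      ih.1.congr fun n => by
        rw [Real.norm_eq_abs, abs_of_nonneg (Sg_nonneg g hg0 _ n)]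
    have hnorm_g : Summable fun n => ‖g n‖ :=
      hgs.congr fun n => by rw [Real.norm_eq_abs, abs_of_nonneg (hg0 n)]
    constructor
    · exact (Summable.of_norm
        (summable_norm_sum_mul_range_of_summable_norm hnorm_a hnorm_g)).congr
        fun n => (Sg_succ' g (t + 1) n).symm
    · rw [tsum_congr (fun n => Sg_succ' g (t + 1) n),
        ← tsum_mul_tsum_eq_tsum_sum_range_of_summable_norm hnorm_a hnorm_g, ih.2]
      ring

lemma ceil_div_le {m n : ℕ} (hm : 2 ≤ m) (hn : 1 ≤ n) : (n + m - 1) / m ≤ (n + 1) / 2 := by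
  have h1 : n + m - 1 = (n - 1) + m := by omega
  have h2 : n + 1 = (n - 1) + 2 := by omega
  rw [h1, h2, Nat.add_div_right _ (by omega), Nat.add_div_right _ (by omega)]
  exact Nat.succ_le_succ (Nat.div_le_div_left hm (by omega))

lemma g_ratio_shift (g : ℕ → ℝ) (hg : ∀ n, 0 < g n)
    (h1 : Tendsto (fun n => g n / g (n + 1)) atTop (𝓝 1)) (j : ℕ) :
    Tendsto (fun n => g (n - j) / g n) atTop (𝓝 1) := by
  induction j with
  | zero =>
    have h : ∀ n : ℕ, g (n - 0) / g n = 1 := fun n => by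
      simp [div_self (hg n).ne']
    exact tendsto_const_nhds.congr fun n => (h n).symm
  | succ j ih =>
    have hA : Tendsto (fun n : ℕ => g (n - (j + 1)) / g (n - j)) atTop (𝓝 1) := by
      have hcomp : Tendsto (fun n : ℕ => g (n - (j + 1)) / g (n - (j + 1) + 1)) atTop (𝓝 1) :=
        h1.comp (tendsto_sub_atTop_nat (j + 1))
      refine hcomp.congr' ?_
      filter_upwards [eventually_ge_atTop (j + 1)] with n hn
      have h2 : n - (j + 1) + 1 = n - j := by omega
      rw [h2]
    have hmul := hA.mul ih
    rw [mul_one] at hmul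
    refine hmul.congr fun n => ?_
    rw [div_mul_div_comm, mul_comm (g (n - (j + 1))) (g (n - j)),
      mul_div_mul_left _ _ (hg (n - j)).ne']

lemma conv_tendsto (m : ℕ) (hm : 2 ≤ m) (g a : ℕ → ℝ)
    (hg : ∀ n, 0 < g n) (hgs : Summable g)
    (hshift : ∀ j, Tendsto (fun n => g (n - j) / g n) atTop (𝓝 1))
    (C₁ : ℝ) (hC1 : 1 ≤ C₁)
    (hC : ∀ n k : ℕ, 1 ≤ n → (n + m - 1) / m ≤ k → k ≤ n → g k / g n ≤ C₁)
    (ha0 : ∀ n, 0 ≤ a n) (has : Summable a)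
    (L : ℝ) (hal : Tendsto (fun n => a n / g n) atTop (𝓝 L))
    (C' : ℝ) (hab : ∀ n, a n ≤ C' * g n) :
    Tendsto (fun n => (∑ k ∈ Finset.range (n + 1), a k * g (n - k)) / g n)
      atTop (𝓝 ((∑' k, a k) + L * ∑' k, g k)) := by
  have hC'0 : 0 ≤ C' := by
    have h0 := hab 0
    have h1 := hg 0
    nlinarith [ha0 0]
  set U : ℕ → ℕ → ℝ := fun n k => if k ≤ n / 2 then a k * g (n - k) / g n else 0 with hU
  set V : ℕ → ℕ → ℝ := fun n j => if j < n - n / 2 then a (n - j) * g j / g n else 0 with hV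
  have keyg1 : ∀ n k : ℕ, 1 ≤ n → k ≤ n / 2 → g (n - k) / g n ≤ C₁ := by
    intro n k hn hk
    have hc := ceil_div_le hm hn
    have hc2 : (n + m - 1) / m ≤ n - k := le_trans hc (by omega)
    exact hC n (n - k) hn hc2 (by omega)
  have keyg2 : ∀ n j : ℕ, 1 ≤ n → j < n - n / 2 → g (n - j) / g n ≤ C₁ := by
    intro n j hn hj
    have hc := ceil_div_le hm hn
    have hc2 : (n + m - 1) / m ≤ n - j := le_trans hc (by omega)
    exact hC n (n - j) hn hc2 (by omega)
  have hUlim : Tendsto (fun n => ∑' k, U n k) atTop (𝓝 (∑' k, a k)) := by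
    refine tendsto_tsum_of_dominated_convergence (bound := fun k => C₁ * a k)
      (has.mul_left C₁) (fun k => ?_) ?_
    · have hmul : Tendsto (fun n => a k * (g (n - k) / g n)) atTop (𝓝 (a k * 1)) :=
        tendsto_const_nhds.mul (hshift k)
      rw [mul_one] at hmul
      refine hmul.congr' ?_
      filter_upwards [eventually_ge_atTop (2 * k)] with n hn
      have hk : k ≤ n / 2 := by omega
      simp only [hU]
      rw [if_pos hk, mul_div_assoc]
    · filter_upwards [eventually_ge_atTop 1] with n hn
      intro k
      simp only [hU]
      by_cases hk : k ≤ n / 2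
      · rw [if_pos hk]
        have h1 : 0 ≤ a k * g (n - k) / g n :=
          div_nonneg (mul_nonneg (ha0 k) (hg (n - k)).le) (hg n).le
        rw [Real.norm_eq_abs, abs_of_nonneg h1, mul_div_assoc]
        calc a k * (g (n - k) / g n) ≤ a k * C₁ :=
              mul_le_mul_of_nonneg_left (keyg1 n k hn hk) (ha0 k)
          _ = C₁ * a k := mul_comm _ _
      · rw [if_neg hk, norm_zero]
        exact mul_nonneg (le_trans zero_le_one hC1) (ha0 k)
  have hVlim : Tendsto (fun n => ∑' j, V n j) atTop (𝓝 (L * ∑' j, g j)) := by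
    rw [show L * (∑' j, g j) = ∑' j, L * g j from (tsum_mul_left).symm]
    refine tendsto_tsum_of_dominated_convergence (bound := fun j => C' * C₁ * g j)
      ((hgs.mul_left _)) (fun j => ?_) ?_
    · have h1 : Tendsto (fun n : ℕ => a (n - j) / g (n - j) * (g (n - j) / g n) * g j)
          atTop (𝓝 (L * 1 * g j)) :=
        ((hal.comp (tendsto_sub_atTop_nat j)).mul (hshift j)).mul_const (g j)
      rw [mul_one] at h1
      refine h1.congr' ?_
      filter_upwards [eventually_ge_atTop (2 * j + 2)] with n hn
      have hj : j < n - n / 2 := by omega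
      simp only [hV]
      rw [if_pos hj]
      have e1 : g (n - j) ≠ 0 := (hg _).ne'
      have e2 : g n ≠ 0 := (hg n).ne'
      field_simp
    · filter_upwards [eventually_ge_atTop 1] with n hn
      intro j
      simp only [hV]
      by_cases hj : j < n - n / 2
      · rw [if_pos hj]
        have h0 : 0 ≤ a (n - j) * g j / g n :=
          div_nonneg (mul_nonneg (ha0 _) (hg j).le) (hg n).le
        rw [Real.norm_eq_abs, abs_of_nonneg h0]
        have hgn := (hg n).le
        have hgj := (hg j).le
        calc a (n - j) * g j / g n ≤ (C' * g (n - j)) * g j / g n := by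
              gcongr
              exact hab _
          _ = (C' * g j) * (g (n - j) / g n) := by ring
          _ ≤ (C' * g j) * C₁ :=
              mul_le_mul_of_nonneg_left (keyg2 n j hn hj) (mul_nonneg hC'0 hgj)
          _ = C' * C₁ * g j := by ring
      · rw [if_neg hj, norm_zero]
        exact mul_nonneg (mul_nonneg hC'0 (le_trans zero_le_one hC1)) (hg j).le
  have hdecomp : ∀ n : ℕ,
      (∑ k ∈ Finset.range (n + 1), a k * g (n - k)) / g n = (∑' k, U n k) + ∑' j, V n j := by
    intro n
    have hUeq : (∑' k, U n k) = ∑ k ∈ Finset.range (n / 2 + 1), a k * g (n - k) / g n := by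
      have h0 : ∀ k ∉ Finset.range (n / 2 + 1), U n k = 0 := by
        intro k hk
        rw [Finset.mem_range] at hk
        simp only [hU]
        exact if_neg (by omega)
      rw [tsum_eq_sum h0]
      refine Finset.sum_congr rfl fun k hk => ?_
      rw [Finset.mem_range] at hk
      simp only [hU]
      exact if_pos (by omega)
    have hVeq : (∑' j, V n j) = ∑ j ∈ Finset.range (n - n / 2), a (n - j) * g j / g n := by
      have h0 : ∀ j ∉ Finset.range (n - n / 2), V n j = 0 := by
        intro j hj
        rw [Finset.mem_range] at hj
        simp only [hV]
        exact if_neg (by omega)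
      rw [tsum_eq_sum h0]
      refine Finset.sum_congr rfl fun j hj => ?_
      rw [Finset.mem_range] at hj
      simp only [hV]
      exact if_pos (by omega)
    have hre : (∑ j ∈ Finset.range (n - n / 2), a (n - j) * g j / g n)
        = ∑ k ∈ Finset.Ico (n / 2 + 1) (n + 1), a k * g (n - k) / g n := by
      refine Finset.sum_nbij' (fun j => n - j) (fun k => n - k) ?_ ?_ ?_ ?_ ?_
      · intro j hj
        rw [Finset.mem_range] at hj
        simp only [Finset.mem_Ico]
        omega
      · intro k hk
        rw [Finset.mem_Ico] at hk
        simp only [Finset.mem_range]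
        omega
      · intro j hj
        rw [Finset.mem_range] at hj
        omega
      · intro k hk
        rw [Finset.mem_Ico] at hk
        omega
      · intro j hj
        rw [Finset.mem_range] at hj
        have h2 : n - (n - j) = j := by omega
        rw [h2]
    rw [Finset.sum_div, hUeq, hVeq, hre, Finset.range_eq_Ico]
    rw [Finset.range_eq_Ico]
    exact (Finset.sum_Ico_consecutive (fun k => a k * g (n - k) / g n) (Nat.zero_le _)
      (by omega : n / 2 + 1 ≤ n + 1)).symm
  exact (hUlim.add hVlim).congr fun n => (hdecomp n).symm

lemma Sg_tendsto (m : ℕ) (hm : 2 ≤ m) (g : ℕ → ℝ) (hg : ∀ n, 0 < g n) (hgs : Summable g)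
    (hshift : ∀ j, Tendsto (fun n => g (n - j) / g n) atTop (𝓝 1))
    (C₁ : ℝ) (hC1 : 1 ≤ C₁)
    (hC : ∀ n k : ℕ, 1 ≤ n → (n + m - 1) / m ≤ k → k ≤ n → g k / g n ≤ C₁) (t : ℕ) :
    Tendsto (fun n => Sg g (t + 1) n / g n) atTop
      (𝓝 (((t : ℝ) + 1) * (∑' k, g k) ^ t)) := by
  induction t with
  | zero =>
    have h : ∀ n, Sg g 1 n / g n = 1 := fun n => by rw [Sg_one, div_self (hg n).ne']
    have h2 : ((0 : ℕ) : ℝ) + 1 = 1 := by norm_num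
    rw [show (((0 : ℕ) : ℝ) + 1) * (∑' k, g k) ^ 0 = 1 by norm_num]
    exact tendsto_const_nhds.congr fun n => (h n).symm
  | succ t ih =>
    obtain ⟨C', hC'⟩ := ih.bddAbove_range
    rw [mem_upperBounds] at hC'
    have hab : ∀ n, Sg g (t + 1) n ≤ C' * g n := by
      intro n
      have h1 : Sg g (t + 1) n / g n ≤ C' := hC' _ ⟨n, rfl⟩
      rwa [div_le_iff₀ (hg n)] at h1
    have hsum := Sg_summable_tsum g (fun i => (hg i).le) hgs t
    have hconv := conv_tendsto m hm g (Sg g (t + 1)) hg hgs hshift C₁ hC1 hC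
      (fun n => Sg_nonneg g (fun i => (hg i).le) _ n) hsum.1 _ ih C' hab
    have hval : (∑' k, Sg g (t + 1) k) + (((t : ℝ) + 1) * (∑' k, g k) ^ t) * (∑' k, g k)
        = (((t + 1 : ℕ) : ℝ) + 1) * (∑' k, g k) ^ (t + 1) := by
      rw [hsum.2]
      push_cast
      ring
    rw [hval] at hconv
    exact hconv.congr fun n => by rw [← Sg_succ']

/-! ### Combinatorics of the order operator -/

lemma ord_eq_iff {k : ℕ} {ζ : Fin k → ℕ} (hζ : Monotone ζ) (ξ : Fin k → ℕ) :
    ord ξ = ζ ↔ ∃ σ : Equiv.Perm (Fin k), ξ = ζ ∘ σ := by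
  constructor
  · intro h
    refine ⟨(Tuple.sort ξ)⁻¹, ?_⟩
    rw [← h]
    funext j
    show ξ j = ξ (Tuple.sort ξ ((Tuple.sort ξ)⁻¹ j))
    rw [Equiv.Perm.inv_def, Equiv.apply_symm_apply]
  · rintro ⟨σ, rfl⟩
    show (ζ ∘ σ) ∘ Tuple.sort (ζ ∘ σ) = ζ
    rw [Tuple.comp_perm_comp_sort_eq_comp_sort,
      Tuple.sort_eq_refl_iff_monotone.mpr hζ]
    rfl

lemma monotone_ord {k : ℕ} (ξ : Fin k → ℕ) : Monotone (ord ξ) := Tuple.monotone_sort ξ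

lemma sum_ord {k : ℕ} (ξ : Fin k → ℕ) : (∑ j, ord ξ j) = ∑ j, ξ j :=
  Equiv.sum_comp (Tuple.sort ξ) ξ

lemma prod_comp_ord {k : ℕ} (F : ℕ → ℝ) (ξ : Fin k → ℕ) :
    (∏ j, F (ξ j)) = ∏ j, F (ord ξ j) :=
  (Equiv.prod_comp (Tuple.sort ξ) (fun j => F (ξ j))).symm

lemma monotone_snoc {k : ℕ} {η : Fin k → ℕ} (hη : Monotone η) {c : ℕ} (hc : ∀ i, η i ≤ c) :
    Monotone (Fin.snoc η c : Fin (k + 1) → ℕ) := by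
  intro i j hij
  rcases Fin.eq_castSucc_or_eq_last j with ⟨j', rfl⟩ | rfl
  · rcases Fin.eq_castSucc_or_eq_last i with ⟨i', rfl⟩ | rfl
    · rw [Fin.snoc_castSucc, Fin.snoc_castSucc]
      exact hη (Fin.castSucc_le_castSucc_iff.mp hij)
    · exact absurd hij (not_le.mpr (Fin.castSucc_lt_last j'))
  · rw [Fin.snoc_last]
    rcases Fin.eq_castSucc_or_eq_last i with ⟨i', rfl⟩ | rfl
    · rw [Fin.snoc_castSucc]
      exact hc i'
    · rw [Fin.snoc_last]

lemma snoc_cut {k : ℕ} (u : Fin (k + 1) → ℕ) :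
    u = Fin.snoc (cut u) (u (Fin.last k)) := by
  funext i
  rcases Fin.eq_castSucc_or_eq_last i with ⟨i', rfl⟩ | rfl
  · rw [Fin.snoc_castSucc]
    rfl
  · rw [Fin.snoc_last]

lemma cut_snoc {k : ℕ} (η : Fin k → ℕ) (c : ℕ) :
    cut (Fin.snoc η c : Fin (k + 1) → ℕ) = η := by
  funext i
  show (Fin.snoc η c : Fin (k + 1) → ℕ) (Fin.castLE _ i) = η i
  have h : Fin.castLE (Nat.sub_le (k + 1) 1) i = Fin.castSucc i := rfl
  rw [h, Fin.snoc_castSucc]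

lemma sum_snoc {k : ℕ} (η : Fin k → ℕ) (c : ℕ) :
    (∑ j, (Fin.snoc η c : Fin (k + 1) → ℕ) j) = (∑ j, η j) + c := by
  rw [Fin.sum_univ_castSucc]
  simp [Fin.snoc_castSucc, Fin.snoc_last]

lemma prod_comp_snoc {k : ℕ} (F : ℕ → ℝ) (η : Fin k → ℕ) (c : ℕ) :
    (∏ j, F ((Fin.snoc η c : Fin (k + 1) → ℕ) j)) = (∏ j, F (η j)) * F c := by
  rw [Fin.prod_univ_castSucc]
  simp [Fin.snoc_castSucc, Fin.snoc_last]

lemma finite_ord_fiber {k : ℕ} {ζ : Fin k → ℕ} (hζ : Monotone ζ) :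
    Finite {ξ : Fin k → ℕ // ord ξ = ζ} := by
  have hsurj : Function.Surjective
      (fun σ : Equiv.Perm (Fin k) => (⟨ζ ∘ σ, (ord_eq_iff hζ _).mpr ⟨σ, rfl⟩⟩ :
        {ξ : Fin k → ℕ // ord ξ = ζ})) := by
    rintro ⟨ξ, hξ⟩
    obtain ⟨σ, rfl⟩ := (ord_eq_iff hζ ξ).mp hξ
    exact ⟨σ, rfl⟩
  exact Finite.of_surjective _ hsurj

lemma tsum_const_subtype {α : Type*} [Finite α] (F : α → ℝ) (c : ℝ) (h : ∀ x, F x = c) :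
    (∑' x, F x) = (Nat.card α : ℝ) * c := by
  cases nonempty_fintype α
  rw [tsum_fintype, Finset.sum_congr rfl fun x _ => h x, Finset.sum_const,
    Finset.card_univ, ← Nat.card_eq_fintype_card, nsmul_eq_mul]

set_option maxHeartbeats 1000000 in
lemma K_snoc {k : ℕ} {η : Fin k → ℕ} (hη : Monotone η) {b : ℕ} (hb : ∀ i, η i < b) :
    K (Fin.snoc η b : Fin (k + 1) → ℕ) = (k + 1) * K η := by
  classical
  set ζ : Fin (k + 1) → ℕ := Fin.snoc η b with hζdef
  have hζ : Monotone ζ := monotone_snoc hη (fun i => (hb i).le)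
  have hvb : ∀ w : Fin (k + 1), ζ w = b ↔ w = Fin.last k := by
    intro w
    constructor
    · intro hw
      rcases Fin.eq_castSucc_or_eq_last w with ⟨w', rfl⟩ | rfl
      · exfalso
        rw [hζdef, Fin.snoc_castSucc] at hw
        exact absurd hw (hb w').ne
      · rfl
    · rintro rfl
      rw [hζdef]
      exact Fin.snoc_last _ _
  have hexu : ∀ ξ : Fin (k + 1) → ℕ, ord ξ = ζ → ∃! u, ξ u = b := by
    intro ξ hξ
    obtain ⟨σ, rfl⟩ := (ord_eq_iff hζ ξ).mp hξ
    refine ⟨σ⁻¹ (Fin.last k), ?_, ?_⟩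
    · show ζ (σ (σ⁻¹ (Fin.last k))) = b
      rw [Equiv.Perm.inv_def, Equiv.apply_symm_apply]
      exact (hvb _).mpr rfl
    · intro u hu
      have h1 : σ u = Fin.last k := (hvb _).mp hu
      rw [← h1, Equiv.Perm.inv_def, Equiv.symm_apply_apply]
  have hζval : ∀ (w : Fin (k + 1)) (hw : w ≠ Fin.last k), ζ w = η (w.castPred hw) := by
    intro w hw
    rcases Fin.eq_castSucc_or_eq_last w with ⟨w', rfl⟩ | rfl
    · rw [hζdef, Fin.snoc_castSucc, Fin.castPred_castSucc]
    · exact absurd rfl hw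
  have hfwd : ∀ (ξ : Fin (k + 1) → ℕ), ord ξ = ζ → ∀ u, ξ u = b →
      ord (Fin.removeNth u ξ) = η := by
    intro ξ hξ u hu
    obtain ⟨σ, rfl⟩ := (ord_eq_iff hζ ξ).mp hξ
    have hσu : σ u = Fin.last k := (hvb _).mp hu
    have hne : ∀ j : Fin k, σ (u.succAbove j) ≠ Fin.last k := by
      intro j hj
      have h1 := σ.injective (hj.trans hσu.symm)
      exact Fin.succAbove_ne u j h1
    have htinj : Function.Injective
        (fun j : Fin k => (σ (u.succAbove j)).castPred (hne j)) := by
      intro j1 j2 h12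
      have h2 : σ (u.succAbove j1) = σ (u.succAbove j2) := by
        have h3 := congrArg Fin.castSucc h12
        rwa [Fin.castSucc_castPred, Fin.castSucc_castPred] at h3
      exact Fin.succAbove_right_injective (σ.injective h2)
    refine (ord_eq_iff hη _).mpr
      ⟨Equiv.ofBijective _ (Finite.injective_iff_bijective.mp htinj), ?_⟩
    funext j
    show ζ (σ (u.succAbove j)) = η ((σ (u.succAbove j)).castPred (hne j))
    exact hζval _ (hne j)
  have hbwd : ∀ (i : Fin (k + 1)) (ξ' : Fin k → ℕ), ord ξ' = η →
      ord (Fin.insertNth i b ξ') = ζ := by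
    intro i ξ' hξ'
    obtain ⟨τ, rfl⟩ := (ord_eq_iff hη ξ').mp hξ'
    set s0 : Fin (k + 1) → Fin (k + 1) :=
      Fin.insertNth i (Fin.last k) (fun j => Fin.castSucc (τ j)) with hs0
    have hval1 : s0 i = Fin.last k := Fin.insertNth_apply_same i _ _
    have hval2 : ∀ j, s0 (i.succAbove j) = Fin.castSucc (τ j) := fun j =>
      Fin.insertNth_apply_succAbove i _ _ j
    have hs0inj : Function.Injective s0 := by
      intro x y hxy
      rcases eq_or_ne x i with rfl | hx
      · rcases eq_or_ne y x with rfl | hy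
        · rfl
        · obtain ⟨z, hz⟩ := Fin.exists_succAbove_eq hy
          rw [← hz, hval2, hval1] at hxy
          exact absurd hxy.symm (Fin.castSucc_lt_last _).ne
      · rcases eq_or_ne y i with rfl | hy
        · obtain ⟨z, hz⟩ := Fin.exists_succAbove_eq hx
          rw [← hz, hval2, hval1] at hxy
          exact absurd hxy (Fin.castSucc_lt_last _).ne
        · obtain ⟨zx, hzx⟩ := Fin.exists_succAbove_eq hx
          obtain ⟨zy, hzy⟩ := Fin.exists_succAbove_eq hy
          rw [← hzx, ← hzy, hval2, hval2] at hxy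
          rw [← hzx, ← hzy]
          rw [τ.injective (Fin.castSucc_inj.mp hxy)]
    refine (ord_eq_iff hζ _).mpr
      ⟨Equiv.ofBijective s0 (Finite.injective_iff_bijective.mp hs0inj), ?_⟩
    funext x
    simp only [Function.comp_apply, Equiv.ofBijective_apply]
    rcases eq_or_ne x i with rfl | hx
    · rw [Fin.insertNth_apply_same, hval1, hζdef, Fin.snoc_last]
    · obtain ⟨z, rfl⟩ := Fin.exists_succAbove_eq hx
      rw [Fin.insertNth_apply_succAbove, hval2, hζdef, Fin.snoc_castSucc]
      rfl
  haveI hF1 : Finite {ξ : Fin (k + 1) → ℕ // ord ξ = ζ} := finite_ord_fiber hζ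
  haveI hF2 : Finite {ξ' : Fin k → ℕ // ord ξ' = η} := finite_ord_fiber hη
  have hidx : ∀ ξ : {ξ : Fin (k + 1) → ℕ // ord ξ = ζ},
      ξ.1 (Fintype.choose _ (hexu ξ.1 ξ.2)) = b := fun ξ =>
    Fintype.choose_spec _ (hexu ξ.1 ξ.2)
  let e : {ξ : Fin (k + 1) → ℕ // ord ξ = ζ} ≃
      Fin (k + 1) × {ξ' : Fin k → ℕ // ord ξ' = η} :=
    { toFun := fun ξ => (Fintype.choose _ (hexu ξ.1 ξ.2),
        ⟨Fin.removeNth (Fintype.choose _ (hexu ξ.1 ξ.2)) ξ.1,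
          hfwd ξ.1 ξ.2 _ (hidx ξ)⟩)
      invFun := fun p => ⟨Fin.insertNth p.1 b p.2.1, hbwd p.1 p.2.1 p.2.2⟩
      left_inv := fun ξ => by
        apply Subtype.ext
        show Fin.insertNth _ b (Fin.removeNth _ ξ.1) = ξ.1
        have h := Fin.insertNth_self_removeNth (α := fun _ => ℕ)
          (Fintype.choose _ (hexu ξ.1 ξ.2)) ξ.1
        rw [hidx ξ] at h
        exact h
      right_inv := fun p => by
        rcases p with ⟨i, ξ'⟩
        have hfst : Fintype.choose (fun u => Fin.insertNth (α := fun _ => ℕ) i b ξ'.1 u = b)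
            (hexu (Fin.insertNth i b ξ'.1) (hbwd i ξ'.1 ξ'.2)) = i := by
          refine (hexu (Fin.insertNth i b ξ'.1) (hbwd i ξ'.1 ξ'.2)).unique ?_ ?_
          · exact Fintype.choose_spec
              (fun u => Fin.insertNth (α := fun _ => ℕ) i b ξ'.1 u = b) _
          · exact Fin.insertNth_apply_same (α := fun _ => ℕ) i b ξ'.1
        refine Prod.ext hfst (Subtype.ext ?_)
        simp only []
        rw [hfst]
        exact Fin.removeNth_insertNth (α := fun _ => ℕ) i b ξ'.1 }
  show Nat.card {ξ : Fin (k + 1) → ℕ // ord ξ = ζ} = (k + 1) * Nat.card _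
  rw [Nat.card_congr e, Nat.card_prod, Nat.card_eq_fintype_card (α := Fin (k + 1)),
    Fintype.card_fin]

lemma denom_eq (f : ℕ → ℝ) (γ : ℝ) (hγ : 0 < γ) (M n : ℕ) :
    (∑' ξ' : {ξ' : Fin M → ℕ // (∑ j, ξ' j) = n}, ∏ j, f (ξ'.1 j))
      = Sg (fun t => γ ^ t * f t) M n / γ ^ n := by
  rw [tsum_fintype, eq_div_iff (pow_ne_zero n hγ.ne'), Sg, Finset.sum_mul]
  refine Finset.sum_congr rfl fun ξ _ => ?_
  rw [Finset.prod_mul_distrib, Finset.prod_pow_eq_pow_sum, ξ.2, mul_comm]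

end CondensationAux

open CondensationAux

/-- **Theorem 1 under the relaxed hypothesis (a6)** (Remark 3): if the ratio of the
maximum to the minimum of `γ^k f k` over `⌈n/m⌉ ≤ k ≤ n` is bounded by a constant
`C₁(m)`, then `ν̂_{m-1,n}(η) → μ̂_{m-1,γ}(η)` for every monotone `η`. -/
theorem condensation_pointwise_relaxed
    (m : ℕ) (hm : 2 ≤ m)
    (f : ℕ → ℝ) (hfpos : ∀ n, 0 < f n)
    (γ : ℝ) (hγ : 0 < γ)
    (hratio : Tendsto (fun n => f n / f (n + 1)) atTop (𝓝 γ))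
    (hsum : Summable fun n => γ ^ n * f n)
    (C₁ : ℝ)
    (hC₁ : ∀ n : ℕ, 1 ≤ n → ∀ k l : ℕ,
      (n + m - 1) / m ≤ k → k ≤ n → (n + m - 1) / m ≤ l → l ≤ n →
      (γ ^ k * f k) / (γ ^ l * f l) ≤ C₁)
    (η : Fin (m - 1) → ℕ) (hη : Monotone η) :
    Tendsto (fun n => nuHat f m n η) atTop (𝓝 (muHat f (m - 1) γ η)) := by
  classical
  obtain ⟨q, rfl⟩ : ∃ q, m = q + 2 := ⟨m - 2, by omega⟩
  set g : ℕ → ℝ := fun t => γ ^ t * f t with hgdef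
  have hg : ∀ t, 0 < g t := fun t => mul_pos (pow_pos hγ t) (hfpos t)
  have hgs : Summable g := hsum
  set Z : ℝ := ∑' t, g t with hZdef
  have hZpos : 0 < Z :=
    lt_of_lt_of_le (hg 0) (Summable.le_tsum hgs 0 fun i _ => (hg i).le)
  -- ratio of consecutive terms of `g` tends to 1
  have h1 : Tendsto (fun t => g t / g (t + 1)) atTop (𝓝 1) := by
    have h2 : Tendsto (fun t => (f t / f (t + 1)) / γ) atTop (𝓝 (γ / γ)) :=
      hratio.div_const γ
    rw [div_self hγ.ne'] at h2
    refine h2.congr fun t => ?_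
    have hf1 : f (t + 1) ≠ 0 := (hfpos (t + 1)).ne'
    rw [hgdef]
    simp only []
    rw [pow_succ]
    field_simp
  have hshift := g_ratio_shift g hg h1
  have hC1ge : (1 : ℝ) ≤ C₁ := by
    have hd : (1 + (q + 2) - 1) / (q + 2) ≤ 1 := by
      have he : 1 + (q + 2) - 1 = q + 2 := by omega
      rw [he, Nat.div_self (by omega)]
    have h := hC₁ 1 le_rfl 1 1 hd le_rfl hd le_rfl
    rwa [div_self (mul_pos (pow_pos hγ 1) (hfpos 1)).ne'] at h
  have hC : ∀ n k : ℕ, 1 ≤ n → (n + (q + 2) - 1) / (q + 2) ≤ k → k ≤ n →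
      g k / g n ≤ C₁ := by
    intro n k hn h2 h3
    refine hC₁ n hn k n h2 h3 ?_ le_rfl
    have hle : n + (q + 2) - 1 ≤ (q + 2) * n := by
      have hq : q * 1 ≤ q * n := Nat.mul_le_mul_left q hn
      have hexp : (q + 2) * n = q * n + 2 * n := by ring
      omega
    calc (n + (q + 2) - 1) / (q + 2) ≤ ((q + 2) * n) / (q + 2) :=
          Nat.div_le_div_right hle
      _ = n := Nat.mul_div_cancel_left n (by omega)
  have hSg := Sg_tendsto (q + 2) (by omega) g hg hgs hshift C₁ hC1ge hC
  set s : ℕ := ∑ j, η j with hsdef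
  set Mx : ℕ := η (Fin.last q) with hMxdef
  have hMx : ∀ i, η i ≤ Mx := fun i => hη (Fin.le_last i)
  have hsum_eta : (∑ j : Fin (q + 1), η j) = s := rfl
  have hprod_eta : (∏ j : Fin (q + 1), f (η j)) = ∏ j, f (η j) := rfl
  -- the exact formula for `nuHat` when `n` is large
  have hform : ∀ n, s + Mx + 1 ≤ n →
      nuHat f (q + 2) n η =
        (((q + 2) * K η : ℕ) : ℝ) *
          ((γ ^ s * ∏ j, f (η j)) * (g (n - s) / Sg g (q + 2) n)) := by
    intro n hn
    set b : ℕ := n - s with hbdef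
    have hbM : ∀ i, η i < b := fun i => by have := hMx i; omega
    set ζ : Fin (q + 2) → ℕ := Fin.snoc η b with hζdef
    have hζ : Monotone ζ := monotone_snoc hη fun i => (hbM i).le
    have hcond : ∀ ξ : Fin (q + 2) → ℕ,
        ((∑ j, ξ j) = n ∧ cut (ord ξ) = η) ↔ ord ξ = ζ := by
      intro ξ
      constructor
      · rintro ⟨hc1, hc2⟩
        have h3 : ord ξ = Fin.snoc (cut (ord ξ)) (ord ξ (Fin.last (q + 1))) :=
          snoc_cut (ord ξ)
        rw [hc2] at h3
        have h4 : (∑ j, ord ξ j) = n := by rw [sum_ord]; exact hc1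
        have h5 : (∑ j, ord ξ j) = s + ord ξ (Fin.last (q + 1)) := by
          conv_lhs => rw [h3]
          rw [sum_snoc, hsum_eta]
        have h6 : ord ξ (Fin.last (q + 1)) = b := by omega
        rw [h3, h6]
      · intro h
        constructor
        · have h4 : (∑ j, ord ξ j) = s + b := by
            rw [h, hζdef, sum_snoc, hsum_eta]
          rw [sum_ord] at h4
          omega
        · rw [h, hζdef, cut_snoc]
    haveI : Finite {ξ : Fin (q + 2) → ℕ // ord ξ = ζ} := finite_ord_fiber hζ
    have he : nuHat f (q + 2) n η = ∑' ξ : {ξ : Fin (q + 2) → ℕ // ord ξ = ζ},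
        nu f (q + 2) n ξ.1 := by
      rw [nuHat]
      exact (Equiv.tsum_eq (Equiv.subtypeEquivRight fun ξ => (hcond ξ).symm)
        (fun ξ : {ξ : Fin (q + 2) → ℕ // (∑ j, ξ j) = n ∧ cut (ord ξ) = η} =>
          nu f (q + 2) n ξ.1)).symm
    have hterm : ∀ ξ : {ξ : Fin (q + 2) → ℕ // ord ξ = ζ},
        nu f (q + 2) n ξ.1 = (f b * ∏ j, f (η j)) * γ ^ n / Sg g (q + 2) n := by
      intro ξ
      have hc := (hcond ξ.1).mpr ξ.2
      have hps : (∏ j : Fin (q + 2), f ((Fin.snoc η b : Fin (q + 2) → ℕ) j))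
          = (∏ j, f (η j)) * f b := prod_comp_snoc f η b
      rw [nu, if_pos hc.1, denom_eq f γ hγ (q + 2) n, ← hgdef, prod_comp_ord f ξ.1, ξ.2,
        hζdef, hps, div_div_eq_mul_div, mul_comm (∏ j, f (η j)) (f b)]
    rw [he, tsum_const_subtype _ _ hterm]
    have hK : (Nat.card {ξ : Fin (q + 2) → ℕ // ord ξ = ζ}) = (q + 2) * K η := by
      rw [show Nat.card {ξ : Fin (q + 2) → ℕ // ord ξ = ζ} = K ζ from rfl, hζdef]
      exact K_snoc hη hbM
    rw [hK]
    have hγn : γ ^ n = γ ^ s * γ ^ b := by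
      rw [← pow_add]
      congr 1
      omega
    rw [hγn, show g b = γ ^ b * f b from rfl]
    ring
  -- the value of `muHat`
  haveI : Finite {ξ : Fin (q + 2 - 1) → ℕ // ord ξ = η} := finite_ord_fiber hη
  have hmu : muHat f (q + 2 - 1) γ η
      = (K η : ℝ) * ((γ ^ s * ∏ j, f (η j)) / Z ^ (q + 1)) := by
    rw [muHat]
    rw [tsum_const_subtype _ ((γ ^ s * ∏ j, f (η j)) / Z ^ (q + 1)) ?_]
    · rfl
    · intro ξ
      rw [mu, prod_comp_ord (fun t => γ ^ t * f t) ξ.1, ξ.2, Finset.prod_mul_distrib,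
        Finset.prod_pow_eq_pow_sum]
      rfl
  -- limits
  have hTpos : 0 < (((q + 1 : ℕ) : ℝ) + 1) * Z ^ (q + 1) := by positivity
  have hlim1 : Tendsto (fun n => g (n - s) / Sg g (q + 2) n) atTop
      (𝓝 (1 / ((((q + 1 : ℕ) : ℝ) + 1) * Z ^ (q + 1)))) := by
    have h3 := (hshift s).div (hSg (q + 1)) hTpos.ne'
    refine h3.congr fun n => ?_
    simp only [Pi.div_apply]
    rw [div_div_div_cancel_right₀ (hg n).ne']
  have hmain : Tendsto
      (fun n => (((q + 2) * K η : ℕ) : ℝ) *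
        ((γ ^ s * ∏ j, f (η j)) * (g (n - s) / Sg g (q + 2) n))) atTop
      (𝓝 ((((q + 2) * K η : ℕ) : ℝ) * ((γ ^ s * ∏ j, f (η j)) *
        (1 / ((((q + 1 : ℕ) : ℝ) + 1) * Z ^ (q + 1)))))) :=
    tendsto_const_nhds.mul (tendsto_const_nhds.mul hlim1)
  have hval : (((q + 2) * K η : ℕ) : ℝ) * ((γ ^ s * ∏ j, f (η j)) *
      (1 / ((((q + 1 : ℕ) : ℝ) + 1) * Z ^ (q + 1))))
      = muHat f (q + 2 - 1) γ η := by
    rw [hmu]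
    push_cast
    have hZne : Z ^ (q + 1) ≠ 0 := (pow_pos hZpos (q + 1)).ne'
    field_simp
    ring
  rw [← hval]
  refine hmain.congr' ?_
  filter_upwards [eventually_ge_atTop (s + Mx + 1)] with n hn
  exact (hform n hn).symm


end
end

section
/- Fix an integer m ≥ 2. For every monotone configuration η ∈ X_{m-1} and every n ≥ 1, the counting numbers satisfy K_{m-1,n}(η) ≤ m · K_{m-1}(η). -/
open Filter Topology

noncomputable section

lemma ord_comp_perm {k : ℕ} (ξ : Fin k → ℕ) (σ : Equiv.Perm (Fin k)) :
    ord (ξ ∘ σ) = ord ξ := Tuple.comp_perm_comp_sort_eq_comp_sort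

lemma ord_eq_self {k : ℕ} {ζ : Fin k → ℕ} (h : Monotone ζ) : ord ζ = ζ := by
  unfold ord
  rw [Tuple.sort_eq_refl_iff_monotone.2 h]
  rfl

lemma ord_eq_iff {k : ℕ} {ζ : Fin k → ℕ} (hζ : Monotone ζ) (ξ : Fin k → ℕ) :
    ord ξ = ζ ↔ ∃ σ : Equiv.Perm (Fin k), ξ = ζ ∘ σ := by
  constructor
  · intro h
    refine ⟨(Tuple.sort ξ)⁻¹, funext fun j => ?_⟩
    have := congrFun h ((Tuple.sort ξ)⁻¹ j)
    simpa [ord] using this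
  · rintro ⟨σ, rfl⟩
    rw [ord_comp_perm, ord_eq_self hζ]

lemma finite_ord_fiber {k : ℕ} {ζ : Fin k → ℕ} (hζ : Monotone ζ) :
    Finite {ξ : Fin k → ℕ // ord ξ = ζ} := by
  have hs : Function.Surjective
      (fun σ : Equiv.Perm (Fin k) =>
        (⟨ζ ∘ σ, by rw [ord_comp_perm, ord_eq_self hζ]⟩ :
          {ξ : Fin k → ℕ // ord ξ = ζ})) := by
    rintro ⟨ξ, hξ⟩
    obtain ⟨σ, rfl⟩ := (ord_eq_iff hζ ξ).1 hξ
    exact ⟨σ, rfl⟩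
  exact Finite.of_surjective _ hs

/-- **Lemma (first part).** For every monotone configuration `η ∈ X_{m-1}` and every
`n ≥ 1`, `K_{m-1,n}(η) ≤ m ⬝ K_{m-1}(η)`. -/
theorem Kn_le_mul_K
    (m : ℕ) (hm : 2 ≤ m)
    (η : Fin (m - 1) → ℕ) (hη : Monotone η)
    (n : ℕ) (hn : 1 ≤ n) :
    Kn m n η ≤ m * K η := by
  obtain ⟨k, rfl⟩ : ∃ k, m = k + 1 := ⟨m - 1, by omega⟩
  have : Finite {ξ' : Fin k → ℕ // ord ξ' = η} := finite_ord_fiber hη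
  set T := {ξ : Fin (k+1) → ℕ // (∑ j, ξ j) = n ∧ cut (ord ξ) = η} with hT
  have key : ∀ ξ : Fin (k+1) → ℕ, cut (ord ξ) = η →
      ord (fun j => ξ ((Tuple.sort ξ (Fin.last k)).succAbove j)) = η := by
    intro ξ hξ
    set σ := Tuple.sort ξ with hσ
    set i := σ (Fin.last k) with hi
    have hne : ∀ j : Fin k, σ⁻¹ (i.succAbove j) ≠ Fin.last k := by
      intro j h
      have : i.succAbove j = i := by
        have := congrArg σ h
        simpa [hi] using this
      exact (Fin.succAbove_ne i j) this
    set τ : Fin k → Fin k := fun j => Fin.castPred (σ⁻¹ (i.succAbove j)) (hne j) with hτ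
    have hτinj : Function.Injective τ := by
      intro a b hab
      have : σ⁻¹ (i.succAbove a) = σ⁻¹ (i.succAbove b) := by
        have := congrArg Fin.castSucc hab
        simpa [hτ] using this
      exact (Fin.succAbove_right_injective) (σ⁻¹.injective this)
    have hτbij : Function.Bijective τ := (Finite.injective_iff_bijective).1 hτinj
    have hcomp : (fun j => ξ (i.succAbove j))
        = (cut (ord ξ)) ∘ (Equiv.ofBijective τ hτbij) := by
      funext j
      show ξ (i.succAbove j) = cut (ord ξ) (τ j)
      have hcast : Fin.castLE (Nat.sub_le (k+1) 1) (τ j) = Fin.castSucc (τ j) := rfl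
      simp only [cut, ord, hcast, Function.comp]
      rw [hτ]
      simp
      exact congrArg ξ (Equiv.apply_symm_apply σ _).symm
    rw [hcomp, hξ]
    exact (ord_eq_iff hη _).2 ⟨Equiv.ofBijective τ hτbij, rfl⟩
  set F : T → Fin (k+1) × {ξ' : Fin k → ℕ // ord ξ' = η} :=
    fun ξ => ⟨Tuple.sort ξ.1 (Fin.last k),
      ⟨fun j => ξ.1 ((Tuple.sort ξ.1 (Fin.last k)).succAbove j), key ξ.1 ξ.2.2⟩⟩ with hF
  have hFinj : Function.Injective F := by
    rintro ⟨ξ, hξs, hξc⟩ ⟨ξ', hξ's, hξ'c⟩ h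
    have h1 : Tuple.sort ξ (Fin.last k) = Tuple.sort ξ' (Fin.last k) :=
      congrArg Prod.fst h
    set i := Tuple.sort ξ (Fin.last k) with hi
    have h2 : ∀ j, ξ (i.succAbove j) = ξ' (i.succAbove j) := by
      intro j
      have := congrArg (fun p => (p.2 : Fin k → ℕ) j) h
      simpa [hF, hi, ← h1] using this
    have hsum : ξ i = ξ' i := by
      have e1 : (∑ j, ξ j) = ξ i + ∑ j, ξ (i.succAbove j) := Fin.sum_univ_succAbove ξ i
      have e2 : (∑ j, ξ' j) = ξ' i + ∑ j, ξ' (i.succAbove j) := Fin.sum_univ_succAbove ξ' i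
      have : ∑ j, ξ (i.succAbove j) = ∑ j, ξ' (i.succAbove j) :=
        Finset.sum_congr rfl fun j _ => h2 j
      omega
    have : ξ = ξ' := by
      funext x
      rcases eq_or_ne x i with rfl | hx
      · exact hsum
      · obtain ⟨j, rfl⟩ := Fin.exists_succAbove_eq hx
        exact h2 j
    exact Subtype.ext this
  have hcard := Nat.card_le_card_of_injective F hFinj
  calc Kn (k+1) n η = Nat.card T := rfl
    _ ≤ Nat.card (Fin (k+1) × {ξ' : Fin k → ℕ // ord ξ' = η}) := hcard
    _ = (k+1) * K η := by
        rw [Nat.card_prod, Nat.card_eq_fintype_card, Fintype.card_fin]; rfl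


end
end

section
/- Fix an integer m ≥ 2, a strictly positive f : ℕ → ℝ and n ≥ 1. For every η ∈ X_{m-1} with |η| ≤ n(1−1/m), the ordered-and-cut canonical measure admits the explicit formula ν̂_{m-1,n}(η) = K_{m-1,n}(η) f(η_1)⋯f(η_{m-1}) f(n−|η|) / ∑_{η' ∈ X_{m-1}, |η'| ≤ n(1−1/m)} K_{m-1,n}(η') f(η'_1)⋯f(η'_{m-1}) f(n−|η'|). -/
open Filter Topology

noncomputable section

-- helper: configurations with fixed sum are finite
instance finite_config (m n : ℕ) : Finite {ξ : Fin m → ℕ // (∑ j, ξ j) = n} := by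
  apply Finite.of_injective
    (fun ξ : {ξ : Fin m → ℕ // (∑ j, ξ j) = n} =>
      (fun j => (⟨ξ.1 j, Nat.lt_succ_of_le
        (le_trans (Finset.single_le_sum (fun _ _ => Nat.zero_le _) (Finset.mem_univ j))
          (le_of_eq ξ.2))⟩ : Fin (n+1))))
  intro a b h
  apply Subtype.ext; funext j
  exact congrArg Fin.val (congrFun h j)

lemma cut_ord_monotone {m : ℕ} (ξ : Fin m → ℕ) : Monotone (cut (ord ξ)) :=
  fun i j hij => Tuple.monotone_sort ξ
    (show Fin.castLE (Nat.sub_le m 1) i ≤ Fin.castLE (Nat.sub_le m 1) j from hij)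

lemma hcoord {k : ℕ} (ζ : Fin (k+1) → ℕ) (i : Fin k) :
    cut ζ i = ζ (Fin.castSucc i) := rfl

lemma cut_ord_size (k n : ℕ) (ξ : Fin (k+1) → ℕ) (hsum : (∑ j, ξ j) = n) :
    (k+1) * (∑ i, cut (ord ξ) i) ≤ k * n := by
  have hmono := Tuple.monotone_sort ξ
  have hs : ∑ j, ord ξ j = n := (Equiv.sum_comp (Tuple.sort ξ) ξ).trans hsum
  have hsplit : (∑ i, cut (ord ξ) i) + ord ξ (Fin.last k) = n := by
    rw [← hs, Fin.sum_univ_castSucc]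
    rfl
  have hn : n ≤ (k+1) * ord ξ (Fin.last k) := by
    calc n = ∑ j, ord ξ j := hs.symm
      _ ≤ ∑ _j : Fin (k+1), ord ξ (Fin.last k) :=
          Finset.sum_le_sum (fun j _ => hmono (Fin.le_last j))
      _ = (k+1) * ord ξ (Fin.last k) := by
          simp [Finset.sum_const, mul_comm]
  have : (k+1) * (∑ i, cut (ord ξ) i) + n ≤ k * n + n := by
    calc (k+1) * (∑ i, cut (ord ξ) i) + n
        ≤ (k+1) * (∑ i, cut (ord ξ) i) + (k+1) * ord ξ (Fin.last k) :=
          Nat.add_le_add_left hn _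
      _ = (k+1) * ((∑ i, cut (ord ξ) i) + ord ξ (Fin.last k)) := by ring
      _ = (k+1) * n := by rw [hsplit]
      _ = k * n + n := by ring
  exact Nat.le_of_add_le_add_right this

lemma fiber_sum (k n : ℕ) (f : ℕ → ℝ) (η : Fin k → ℕ) :
    (∑' ξ : {ξ : Fin (k+1) → ℕ // (∑ j, ξ j) = n ∧ cut (ord ξ) = η}, ∏ j, f (ξ.1 j))
      = (Kn (k+1) n η : ℝ) * (∏ i, f (η i)) * f (n - ∑ i, η i) := by
  haveI : Finite {ξ : Fin (k+1) → ℕ // (∑ j, ξ j) = n ∧ cut (ord ξ) = η} := by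
    apply Finite.of_injective
      (fun ξ : {ξ : Fin (k+1) → ℕ // (∑ j, ξ j) = n ∧ cut (ord ξ) = η} =>
        (⟨ξ.1, ξ.2.1⟩ : {ξ : Fin (k+1) → ℕ // (∑ j, ξ j) = n}))
    intro a b h; exact Subtype.ext (congrArg (fun x : {ξ : Fin (k+1) → ℕ // (∑ j, ξ j) = n} => x.1) h)
  haveI := Fintype.ofFinite {ξ : Fin (k+1) → ℕ // (∑ j, ξ j) = n ∧ cut (ord ξ) = η}
  have hconst : ∀ ξ : {ξ : Fin (k+1) → ℕ // (∑ j, ξ j) = n ∧ cut (ord ξ) = η},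
      (∏ j, f (ξ.1 j)) = (∏ i, f (η i)) * f (n - ∑ i, η i) := by
    rintro ⟨ξ, hsum, hcut⟩
    have h1 : ∏ j, f (ξ j) = ∏ j, f (ord ξ j) :=
      (Equiv.prod_comp (Tuple.sort ξ) (fun j => f (ξ j))).symm
    have hs : ∑ j, ord ξ j = n := (Equiv.sum_comp (Tuple.sort ξ) ξ).trans hsum
    have hsplit : (∑ i, η i) + ord ξ (Fin.last k) = n := by
      rw [← hs, Fin.sum_univ_castSucc, ← hcut]
      rfl
    have hlast : ord ξ (Fin.last k) = n - ∑ i, η i := by omega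
    simp only [h1, Fin.prod_univ_castSucc, hlast]
    congr 1
    exact Finset.prod_congr rfl (fun i _ => by rw [← hcut]; rfl)
  rw [tsum_fintype, Finset.sum_congr rfl (fun ξ _ => hconst ξ), Finset.sum_const,
    Finset.card_univ, Kn, Nat.card_eq_fintype_card, nsmul_eq_mul, mul_assoc]


/-- The explicit formula for the ordered-and-cut canonical measure: for every
monotone `η ∈ X_{m-1}` with `|η| ≤ n(1-1/m)`,
`ν̂_{m-1,n}(η) = K_{m-1,n}(η) f(η_1)⋯f(η_{m-1}) f(n-|η|) /
  ∑_{η' ∈ X_{m-1}, |η'| ≤ n(1-1/m)} K_{m-1,n}(η') f(η'_1)⋯f(η'_{m-1}) f(n-|η'|)`. -/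
theorem nuHat_explicit_formula
    (m : ℕ) (hm : 2 ≤ m)
    (f : ℕ → ℝ) (hfpos : ∀ k, 0 < f k)
    (n : ℕ) (hn : 1 ≤ n)
    (η : Fin (m - 1) → ℕ) (hη : Monotone η)
    (hsize : m * (∑ i, η i) ≤ (m - 1) * n) :
    nuHat f m n η
      = (Kn m n η : ℝ) * (∏ i, f (η i)) * f (n - ∑ i, η i) /
        ∑' η' : {η' : Fin (m - 1) → ℕ //
            Monotone η' ∧ m * (∑ i, η' i) ≤ (m - 1) * n},
          (Kn m n η'.1 : ℝ) * (∏ i, f (η'.1 i)) * f (n - ∑ i, η'.1 i) := by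
  obtain ⟨k, rfl⟩ : ∃ k, m = k + 1 := ⟨m - 1, by omega⟩
  classical
  set C := {η' : Fin (k + 1 - 1) → ℕ //
      Monotone η' ∧ (k + 1) * (∑ i, η' i) ≤ (k + 1 - 1) * n} with hC
  set Z := ∑' ξ' : {ξ' : Fin (k+1) → ℕ // (∑ j, ξ' j) = n}, ∏ j, f (ξ'.1 j) with hZdef
  have hnu : nuHat f (k+1) n η
      = ((Kn (k+1) n η : ℝ) * (∏ i, f (η i)) * f (n - ∑ i, η i)) / Z := by
    rw [nuHat]
    have h1 : ∀ ξ : {ξ : Fin (k+1) → ℕ // (∑ j, ξ j) = n ∧ cut (ord ξ) = η},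
        nu f (k+1) n ξ.1 = (∏ j, f (ξ.1 j)) / Z := by
      intro ξ
      rw [nu, if_pos ξ.2.1]
    rw [tsum_congr h1, tsum_div_const, fiber_sum]
    rfl
  rw [hnu]
  congr 1
  -- Z equals the denominator
  let F : C → Type := fun b =>
    {ξ : Fin (k+1) → ℕ // (∑ j, ξ j) = n ∧ cut (ord ξ) = b.1}
  let e : (Σ b : C, F b) ≃ {ξ' : Fin (k+1) → ℕ // (∑ j, ξ' j) = n} :=
    { toFun := fun p => ⟨p.2.1, p.2.2.1⟩
      invFun := fun ξ => ⟨⟨cut (ord ξ.1), cut_ord_monotone ξ.1,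
        cut_ord_size k n ξ.1 ξ.2⟩, ⟨ξ.1, ξ.2, rfl⟩⟩
      left_inv := by
        rintro ⟨⟨b, hb⟩, ⟨x, hx1, hx2⟩⟩
        dsimp only at hx2
        subst hx2
        rfl
      right_inv := fun ξ => rfl }
  haveI : Finite (Σ b : C, F b) := Finite.of_equiv _ e.symm
  calc Z = ∑' p : Σ b : C, F b, ∏ j, f ((e p).1 j) := (e.tsum_eq _).symm
    _ = ∑' (b : C) (x : F b), ∏ j, f (x.1 j) := Summable.tsum_sigma (Summable.of_finite)
    _ = ∑' η' : C, (Kn (k+1) n η'.1 : ℝ) * (∏ i, f (η'.1 i)) * f (n - ∑ i, η'.1 i) :=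
        tsum_congr fun b => fiber_sum k n f b.1

end
end
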